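/- arXiv:0908.1218 — 2 statements merged into one kernel-verified Lean document; each statement's English description precedes it below -/
import Mathlib

section
/- Let B be an n×n matrix over a commutative ring R. Define B₊ as the upper triangular matrix with (B₊)_{ij} = B_{ij} for i<j, 1 for i=j, 0 otherwise, and B₋ as the matrix with (B₋)_{ij} = B_{ji} for i<j, B_{ii}−1 for i=j, 0 otherwise. For each 1≤i≤n define the matrix r^B_i by (r^B_i)_{st} = δ_{st} − δ_{si}B_{it}. Then −B₊⁻¹ · B₋ᵀ = r^B_1 · r^B_2 · ⋯ · r^B_n. -/
open Matrix

/-- The matrix `r^B_i`: the identity matrix with the `i`-th row of `B` subtracted,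
i.e. `(r^B_i)_{st} = δ_{st} - δ_{si} B_{it}`. -/
def reflMat {n : ℕ} {R : Type*} [CommRing R] (B : Matrix (Fin n) (Fin n) R) (i : Fin n) :
    Matrix (Fin n) (Fin n) R :=
  Matrix.of fun s t => (if s = t then (1 : R) else 0) - (if s = i then B i t else 0)

/-- The upper triangular part `B₊` of `B`, with ones on the diagonal. -/
def upperPart {n : ℕ} {R : Type*} [CommRing R] (B : Matrix (Fin n) (Fin n) R) :
    Matrix (Fin n) (Fin n) R :=
  Matrix.of fun i j => if i < j then B i j else if i = j then 1 else 0

/-- The lower triangular part `B₋` of `B` (transposed to an upper triangular matrix),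
with `B_{ii} - 1` on the diagonal. -/
def lowerPart {n : ℕ} {R : Type*} [CommRing R] (B : Matrix (Fin n) (Fin n) R) :
    Matrix (Fin n) (Fin n) R :=
  Matrix.of fun i j => if i < j then B j i else if i = j then B i i - 1 else 0

/-!
Write `U = B₊`. Since `-(B₋)ᵀ = U - B`, it suffices to show `U · r^B_1 ⋯ r^B_n = U - B`.
Inductively, `U · r^B_1 ⋯ r^B_k` is `U` with its first `k` rows replaced by those of `U - B`.
The `(k+1)`-st column of this matrix is the unit vector `e_{k+1}` (the entries above the
diagonal cancel), and right multiplication by `r^B_{k+1} = 1 - e_{k+1} B_{k+1,·}` then just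
subtracts `B_{k+1,·}` from row `k+1`.
-/

section

variable {n : ℕ} {R : Type*} [CommRing R]

def topRows (B : Matrix (Fin n) (Fin n) R) (k : ℕ) : Matrix (Fin n) (Fin n) R :=
  Matrix.of fun s t => if (s : ℕ) < k then B s t else 0

lemma topRows_zero (B : Matrix (Fin n) (Fin n) R) : topRows B 0 = 0 := by
  ext s t
  simp [topRows]

lemma topRows_of_le (B : Matrix (Fin n) (Fin n) R) {k : ℕ} (hk : n ≤ k) : topRows B k = B := by
  ext s t
  simp [topRows, s.isLt.trans_le hk]

lemma topRows_succ (B : Matrix (Fin n) (Fin n) R) {k : ℕ} (hk : k < n) :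
    topRows B (k + 1) =
      topRows B k + (0 : Matrix (Fin n) (Fin n) R).updateRow ⟨k, hk⟩ (B ⟨k, hk⟩) := by
  ext ⟨s, hs⟩ t
  simp only [topRows, of_apply, Matrix.add_apply, updateRow_apply, Matrix.zero_apply, Fin.ext_iff]
  split_ifs <;> first | omega | simp_all

lemma reflMat_eq (B : Matrix (Fin n) (Fin n) R) (i : Fin n) :
    reflMat B i = 1 - (0 : Matrix (Fin n) (Fin n) R).updateRow i (B i) := by
  ext s t
  simp [reflMat, updateRow_apply, one_apply]

lemma mul_reflMat_of_col_eq_one (B M : Matrix (Fin n) (Fin n) R) (i : Fin n)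
    (hM : ∀ s, M s i = (1 : Matrix (Fin n) (Fin n) R) s i) :
    M * reflMat B i = M - (0 : Matrix (Fin n) (Fin n) R).updateRow i (B i) := by
  rw [reflMat_eq, mul_sub, mul_one]
  congr 1
  ext s t
  simp [mul_apply, updateRow_apply, hM, one_apply]

lemma upperPart_sub_topRows_col_eq_one (B : Matrix (Fin n) (Fin n) R) (k : Fin n) (s : Fin n) :
    (upperPart B - topRows B k) s k = (1 : Matrix (Fin n) (Fin n) R) s k := by
  rcases lt_trichotomy s k with h | rfl | h
  · simp [upperPart, topRows, h, h.ne]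
  · simp [upperPart, topRows]
  · simp [upperPart, topRows, h.not_gt, h.ne']

lemma upperPart_mul_prod_take_reflMat (B : Matrix (Fin n) (Fin n) R) {k : ℕ} (hk : k ≤ n) :
    upperPart B * ((List.ofFn (reflMat B)).take k).prod = upperPart B - topRows B k := by
  induction k with
  | zero => simp [topRows_zero]
  | succ k ih =>
    have hkn : k < n := hk
    rw [List.prod_take_succ _ _ (by simpa using hkn), ← mul_assoc, ih hkn.le,
      List.getElem_ofFn,
      mul_reflMat_of_col_eq_one _ _ _ (upperPart_sub_topRows_col_eq_one B ⟨k, hkn⟩),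
      topRows_succ B hkn, sub_add_eq_sub_sub]

lemma upperPart_sub_self (B : Matrix (Fin n) (Fin n) R) : upperPart B - B = -(lowerPart B)ᵀ := by
  ext s t
  rcases lt_trichotomy s t with h | rfl | h
  · simp [upperPart, lowerPart, h, h.not_gt, h.ne']
  · simp [upperPart, lowerPart]
  · simp [upperPart, lowerPart, h, h.not_gt, h.ne']

lemma upperPart_mul_prod_reflMat (B : Matrix (Fin n) (Fin n) R) :
    upperPart B * (List.ofFn (reflMat B)).prod = -(lowerPart B)ᵀ := by
  have h := upperPart_mul_prod_take_reflMat B le_rfl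
  rwa [List.take_of_length_le (by simp), topRows_of_le B le_rfl, upperPart_sub_self] at h

lemma upperPart_isUpperTriangular (B : Matrix (Fin n) (Fin n) R) :
    (upperPart B).IsUpperTriangular := by
  intro i j (hij : j < i)
  simp [upperPart, hij.not_gt, hij.ne']

lemma det_upperPart (B : Matrix (Fin n) (Fin n) R) : (upperPart B).det = 1 := by
  rw [det_of_isUpperTriangular (upperPart_isUpperTriangular B)]
  simp [upperPart]

end

/-- `-B₊⁻¹ ⬝ B₋ᵀ = r^B_1 ⬝ r^B_2 ⬝ ⋯ ⬝ r^B_n`. -/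
theorem neg_upperPart_inv_mul_lowerPart_transpose_eq_prod_reflMat
    {n : ℕ} {R : Type*} [CommRing R] (B : Matrix (Fin n) (Fin n) R) :
    -((upperPart B)⁻¹ * (lowerPart B)ᵀ) =
      (List.ofFn fun i : Fin n => reflMat B i).prod := by
  have : Invertible (upperPart B) :=
    (upperPart B).invertibleOfIsUnitDet (by simp [det_upperPart])
  rw [← mul_neg, ← upperPart_mul_prod_reflMat]
  exact inv_mul_cancel_left_of_invertible _ _
end

section
/- Let C = [[1,−1,1],[0,1,−1],[0,0,1]] and B = C + Cᵀ, and let r_1, r_3 be the reflection matrices (r^B_i)_{st} = δ_{st} − δ_{si}B_{it}. Then the matrices (r_1ᵀ C r_1)⁻¹ and (r_3ᵀ C r_3)⁻¹ each contain a negative entry; explicitly (r_1ᵀ C r_1)⁻¹ = [[1,0,0],[0,1,1],[−1,0,1]] and (r_3ᵀ C r_3)⁻¹ = [[1,1,0],[0,1,0],[−1,0,1]]. -/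
/-!
Since `B` has `2`'s on the diagonal, each `rᵢ` is an involution, so
`(rᵢᵀ C rᵢ)⁻¹ = rᵢ C⁻¹ rᵢᵀ`; with `C⁻¹ = [[1,1,0],[0,1,1],[0,0,1]]` both products are a direct
computation.
-/

open Matrix

section

variable {n : ℕ} {R : Type*} [CommRing R] {B : Matrix (Fin n) (Fin n) R} {i : Fin n}

theorem reflMat_mul_self (hB : B i i = 2) : reflMat B i * reflMat B i = 1 := by
  ext s t
  simp only [reflMat, mul_apply, of_apply, sub_mul, mul_sub, Finset.sum_sub_distrib, ite_mul,
    mul_ite, one_mul, mul_one, zero_mul, mul_zero, Finset.sum_ite_eq', Finset.mem_univ, if_true,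
    one_apply, hB]
  split_ifs <;> ring

theorem reflMat_transpose_mul_mul_reflMat_inv (hB : B i i = 2) (C : Matrix (Fin n) (Fin n) R) :
    ((reflMat B i)ᵀ * C * reflMat B i)⁻¹ = reflMat B i * C⁻¹ * (reflMat B i)ᵀ := by
  rw [Matrix.mul_inv_rev, Matrix.mul_inv_rev, ← transpose_nonsing_inv,
    inv_eq_left_inv (reflMat_mul_self hB), mul_assoc]

end

/-- For `C = [[1,−1,1],[0,1,−1],[0,0,1]]`, `B = C + Cᵀ` and the reflections `r₁, r₃`,
the matrices `(r₁ᵀ C r₁)⁻¹` and `(r₃ᵀ C r₃)⁻¹` are as displayed and each has a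
negative entry. -/
theorem example_reflected_euler_forms :
    let C : Matrix (Fin 3) (Fin 3) ℤ := !![1, -1, 1; 0, 1, -1; 0, 0, 1]
    let B := C + Cᵀ
    let r1 := reflMat B 0
    let r3 := reflMat B 2
    (r1ᵀ * C * r1)⁻¹ = !![1, 0, 0; 0, 1, 1; -1, 0, 1] ∧
    (r3ᵀ * C * r3)⁻¹ = !![1, 1, 0; 0, 1, 0; -1, 0, 1] ∧
    (∃ i j, (r1ᵀ * C * r1)⁻¹ i j < 0) ∧
    (∃ i j, (r3ᵀ * C * r3)⁻¹ i j < 0) := by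
  intro C B r1 r3
  have hB : ∀ i, B i i = 2 := by decide
  have hC : C⁻¹ = !![1, 1, 0; 0, 1, 1; 0, 0, 1] := inv_eq_right_inv (by decide)
  have h1 : (r1ᵀ * C * r1)⁻¹ = !![1, 0, 0; 0, 1, 1; -1, 0, 1] := by
    rw [reflMat_transpose_mul_mul_reflMat_inv (hB 0), hC]
    decide
  have h3 : (r3ᵀ * C * r3)⁻¹ = !![1, 1, 0; 0, 1, 0; -1, 0, 1] := by
    rw [reflMat_transpose_mul_mul_reflMat_inv (hB 2), hC]
    decide
  exact ⟨h1, h3, ⟨2, 0, by rw [h1]; decide⟩, ⟨2, 0, by rw [h3]; decide⟩⟩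
end
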